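/- arXiv:2209.01093 — 3 statements merged into one kernel-verified Lean document; each statement's English description precedes it below -/
import Mathlib

section
/- Let G be a finite simple graph with at least one vertex, let l ≥ 4 be an integer, let H ∈ IIM_l(G), let X be the set of level-l vertices of H, and let X̄ = V(H) \ X. Then Σ_{v ∈ X̄} deg_{X̄}(v) ≤ 14 · Σ_{v ∈ X} deg_H(v); equivalently, 2·|E(H[X̄])| ≤ 14 · vol(X), where E(H[X̄]) is the edge set of the induced subgraph of H on X̄ and vol(X) = Σ_{v ∈ X} deg_H(v). -/
/-- Vertex type after `l` IIM steps starting from vertex type `V`: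
at each step every existing vertex gets one new copy. -/
def IterV (V : Type) : ℕ → Type
  | 0 => V
  | l + 1 => IterV V l ⊕ IterV V l

instance iterVFintype {V : Type} [Fintype V] : ∀ l, Fintype (IterV V l)
  | 0 => inferInstanceAs (Fintype V)
  | l + 1 =>
    letI := iterVFintype (V := V) l
    inferInstanceAs (Fintype (IterV V l ⊕ IterV V l))

instance iterVNonempty {V : Type} [Nonempty V] : ∀ l, Nonempty (IterV V l)
  | 0 => inferInstanceAs (Nonempty V)
  | l + 1 =>
    letI := iterVNonempty (V := V) l
    inferInstanceAs (Nonempty (IterV V l ⊕ IterV V l))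

/-- One IIM step: each vertex `v` of `G` gets a new copy (`Sum.inr v`), which is a
clone of `v` (joined to the closed neighborhood of `v`) if `σ v = true`, and an
anticlone of `v` (joined to the complement of the closed neighborhood) if `σ v = false`.
Old vertices (`Sum.inl`) keep the edges of `G`; new vertices form an independent set. -/
def iimStep {V : Type} (G : SimpleGraph V) (σ : V → Bool) : SimpleGraph (V ⊕ V) where
  Adj x y :=
    match x, y with
    | Sum.inl u, Sum.inl v => G.Adj u v
    | Sum.inl u, Sum.inr v =>
        if σ v = true then u = v ∨ G.Adj u v else ¬(u = v ∨ G.Adj u v)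
    | Sum.inr u, Sum.inl v =>
        if σ u = true then v = u ∨ G.Adj v u else ¬(v = u ∨ G.Adj v u)
    | Sum.inr _, Sum.inr _ => False
  symm := ⟨by
    rintro (u | u) (v | v) h
    · exact G.adj_symm h
    · exact h
    · exact h
    · exact h⟩
  loopless := ⟨by
    rintro (u | u) h
    · exact G.irrefl h
    · exact h⟩

/-- The IIM graph after `l` steps starting from `G`, where `σ i` records, for each
vertex existing after `i` steps, whether its copy created at step `i+1` is a clone
(`true`) or an anticlone (`false`).  `IIM_l(G)` is exactly the set of graphs of the
form `iimGraph G σ l` as `σ` varies. -/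
def iimGraph {V : Type} (G : SimpleGraph V) (σ : ∀ i, IterV V i → Bool) :
    ∀ l, SimpleGraph (IterV V l)
  | 0 => G
  | l + 1 => iimStep (iimGraph G σ l) (σ l)

/-- The level (creation step) of a vertex of an IIM graph. -/
def levelOf {V : Type} : ∀ l, IterV V l → ℕ
  | 0, _ => 0
  | l + 1, Sum.inl x => levelOf l x
  | l + 1, Sum.inr _ => l + 1

/-- The (level-0) vertex `x` of the initial graph, viewed as a vertex of the IIM graph
after `l` steps. -/
def liftV {V : Type} (x : V) : ∀ l, IterV V l
  | 0 => x
  | l + 1 => Sum.inl (liftV x l)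

/-!
Write `H = iimStep F σ` with `F ∈ IIM_{l-1}(G)` on `N` vertices. The old vertices induce `F`, so
the left side is `∑ deg_F`, while the copy of `x` has degree `deg_F x + 1` or `N - 1 - deg_F x`,
hence at least `μ x`, the minimum of the two. The newest vertices of `F` form an independent set
`W` of size `N / 2`, so `deg_F ≤ N / 2 ≤ 2 μ` on `W`. A vertex with `deg_F ≤ 14 (N - 1) / 15` has
`deg_F ≤ 14 μ`. A vertex `b` of larger degree lies outside `W` and can miss at most `N / 2` of its
neighbours in `W`, so `deg_F b ≤ 6 |N(b) ∩ W|`; double counting bounds the sum of these by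
`6 ∑_W deg_F ≤ 12 ∑_W μ`, and the three bounds add up to `∑ deg_F ≤ 14 ∑ μ`.
-/

open Finset

namespace SimpleGraph

variable {α : Type*} [Fintype α] (F : SimpleGraph α) [DecidableRel F.Adj]

/-- The smaller of the degrees of a clone (`deg x + 1`) and of an anticlone (`N - 1 - deg x`)
of `x`. -/
def minCopyDegree (x : α) : ℕ := min (F.degree x + 1) (Fintype.card α - 1 - F.degree x)

lemma degree_le_fourteen_mul_minCopyDegree {x : α}
    (hx : 15 * F.degree x ≤ 14 * (Fintype.card α - 1)) :
    F.degree x ≤ 14 * F.minCopyDegree x := by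
  have := F.degree_lt_card_verts x
  unfold minCopyDegree; omega

lemma degree_le_two_mul_minCopyDegree {x : α} (hN : 4 ≤ Fintype.card α)
    (hx : 2 * F.degree x ≤ Fintype.card α) : F.degree x ≤ 2 * F.minCopyDegree x := by
  unfold minCopyDegree; omega

variable {F}

lemma sum_card_filter_adj_le_sum_degree (B W : Finset α) :
    ∑ b ∈ B, #{w ∈ W | F.Adj b w} ≤ ∑ w ∈ W, F.degree w := by
  rw [show ∑ b ∈ B, #{w ∈ W | F.Adj b w} = ∑ b ∈ B, #(W.bipartiteAbove F.Adj b) from rfl,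
    sum_card_bipartiteAbove_eq_sum_card_bipartiteBelow]
  refine sum_le_sum fun w _ => ?_
  rw [← card_neighborFinset_eq_degree]
  exact card_le_card fun b hb => (mem_neighborFinset _ _ _).2 (mem_filter.1 hb).2.symm

variable [DecidableEq α] {W : Finset α}

lemma degree_le_card_sub_of_isIndepSet (hW : F.IsIndepSet (W : Set α)) {w : α} (hw : w ∈ W) :
    F.degree w ≤ Fintype.card α - #W := by
  rw [← card_neighborFinset_eq_degree, ← card_compl]
  refine card_le_card fun v hv => mem_compl.2 fun hvW => ?_
  exact hW hw hvW (ne_of_adj _ ((mem_neighborFinset _ _ _).1 hv)) ((mem_neighborFinset _ _ _).1 hv)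

lemma degree_le_card_filter_adj_add {x : α} (hx : x ∉ W) :
    F.degree x ≤ #{w ∈ W | F.Adj x w} + (Fintype.card α - #W - 1) := by
  have hsub : F.neighborFinset x ⊆ {w ∈ W | F.Adj x w} ∪ Wᶜ.erase x := by
    intro v hv
    rw [mem_neighborFinset] at hv
    by_cases hvW : v ∈ W
    · exact mem_union_left _ (mem_filter.2 ⟨hvW, hv⟩)
    · exact mem_union_right _ (mem_erase.2 ⟨(ne_of_adj _ hv).symm, mem_compl.2 hvW⟩)
  calc F.degree x = #(F.neighborFinset x) := (card_neighborFinset_eq_degree _ _).symm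
    _ ≤ _ := (card_le_card hsub).trans (card_union_le _ _)
    _ = _ := by rw [card_erase_of_mem (mem_compl.2 hx), card_compl]

theorem sum_degree_le_fourteen_mul_sum_minCopyDegree (hW : F.IsIndepSet (W : Set α))
    (hWcard : 2 * #W = Fintype.card α) (hN : 4 ≤ Fintype.card α) :
    ∑ x, F.degree x ≤ 14 * ∑ x, F.minCopyDegree x := by
  set N := Fintype.card α
  have hdegW : ∀ w ∈ W, 2 * F.degree w ≤ N := fun w hw => by
    have := degree_le_card_sub_of_isIndepSet hW hw; omega
  let B : Finset α := {x | 14 * (N - 1) < 15 * F.degree x}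
  have hBW : Disjoint B W := Finset.disjoint_right.2 fun w hw hwB => by
    have := hdegW w hw; have := (mem_filter.1 hwB).2; omega
  have hB : ∀ b ∈ B, F.degree b ≤ 6 * #{w ∈ W | F.Adj b w} := fun b hb => by
    have := degree_le_card_filter_adj_add (F := F) (Finset.disjoint_left.1 hBW hb)
    have := (mem_filter.1 hb).2
    omega
  have hRest : ∀ x ∉ B, F.degree x ≤ 14 * F.minCopyDegree x := fun x hx =>
    F.degree_le_fourteen_mul_minCopyDegree (not_lt.1 fun h => hx (mem_filter.2 ⟨mem_univ x, h⟩))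
  have hsplit : ∀ f : α → ℕ, ∑ x, f x = ∑ x ∈ (B ∪ W)ᶜ, f x + ∑ x ∈ W, f x + ∑ x ∈ B, f x :=
    fun f => by rw [add_assoc, add_comm (∑ x ∈ W, f x), ← sum_union hBW, sum_compl_add_sum]
  calc ∑ x, F.degree x
      = ∑ x ∈ (B ∪ W)ᶜ, F.degree x + ∑ x ∈ W, F.degree x + ∑ x ∈ B, F.degree x := hsplit _
    _ ≤ ∑ x ∈ (B ∪ W)ᶜ, F.degree x + ∑ x ∈ W, F.degree x + 6 * ∑ x ∈ W, F.degree x := by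
      grw [sum_le_sum hB, ← mul_sum, sum_card_filter_adj_le_sum_degree]
    _ = ∑ x ∈ (B ∪ W)ᶜ, F.degree x + ∑ x ∈ W, 7 * F.degree x := by
      rw [mul_sum, add_assoc, ← sum_add_distrib]
      exact congrArg _ (sum_congr rfl fun _ _ => by ring)
    _ ≤ ∑ x ∈ (B ∪ W)ᶜ, 14 * F.minCopyDegree x + ∑ x ∈ W, 14 * F.minCopyDegree x := by
      refine add_le_add (sum_le_sum fun x hx => ?_) (sum_le_sum fun x hx => ?_)
      · exact hRest x fun h => mem_compl.1 hx (mem_union_left _ h)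
      · have := F.degree_le_two_mul_minCopyDegree hN (hdegW x hx); omega
    _ ≤ 14 * ∑ x, F.minCopyDegree x := by
      rw [hsplit F.minCopyDegree, ← mul_sum, ← mul_sum]; omega

end SimpleGraph

section IIMStep

variable {α : Type} (F : SimpleGraph α) (σ : α → Bool)

@[simp]
lemma iimStep_adj_inl_inl {u v : α} : (iimStep F σ).Adj (Sum.inl u) (Sum.inl v) ↔ F.Adj u v :=
  Iff.rfl

@[simp]
lemma iimStep_adj_inr_inl {u v : α} :
    (iimStep F σ).Adj (Sum.inr u) (Sum.inl v) ↔
      if σ u then v = u ∨ F.Adj v u else ¬(v = u ∨ F.Adj v u) :=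
  Iff.rfl

@[simp]
lemma iimStep_not_adj_inr_inr {u v : α} : ¬(iimStep F σ).Adj (Sum.inr u) (Sum.inr v) :=
  id

variable [Fintype α] [DecidableRel F.Adj]

lemma filter_isLeft_neighborFinset_iimStep_inl (x : α)
    [Fintype ((iimStep F σ).neighborSet (Sum.inl x))] :
    {u ∈ (iimStep F σ).neighborFinset (Sum.inl x) | u.isLeft} =
      (F.neighborFinset x).map Function.Embedding.inl := by
  ext (u | u) <;> simp [(iimStep F σ).adj_comm (Sum.inl x), F.adj_comm x u]

variable [DecidableEq α]

lemma neighborFinset_iimStep_inr (x : α) [Fintype ((iimStep F σ).neighborSet (Sum.inr x))] :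
    (iimStep F σ).neighborFinset (Sum.inr x) =
      (if σ x then insert x (F.neighborFinset x) else (insert x (F.neighborFinset x))ᶜ).map
        Function.Embedding.inl := by
  ext (u | u)
  · cases h : σ x <;> simp [h, F.adj_comm x u]
  · simp

lemma degree_iimStep_inr (x : α) [Fintype ((iimStep F σ).neighborSet (Sum.inr x))] :
    (iimStep F σ).degree (Sum.inr x) =
      if σ x then F.degree x + 1 else Fintype.card α - (F.degree x + 1) := by
  rw [← SimpleGraph.card_neighborFinset_eq_degree, neighborFinset_iimStep_inr]
  cases σ x <;> simp [card_compl, card_insert_of_notMem]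
  omega

lemma minCopyDegree_le_degree_iimStep_inr (x : α)
    [Fintype ((iimStep F σ).neighborSet (Sum.inr x))] :
    F.minCopyDegree x ≤ (iimStep F σ).degree (Sum.inr x) := by
  rw [degree_iimStep_inr, SimpleGraph.minCopyDegree]
  split <;> omega

end IIMStep

theorem sum_card_filter_isLeft_neighborFinset_iimStep_le {γ : Type} [Fintype γ]
    (F : SimpleGraph γ) (σ : γ → Bool) [∀ v, Fintype ((iimStep F σ).neighborSet v)]
    {W : Finset γ} (hW : F.IsIndepSet (W : Set γ)) (hWcard : 2 * #W = Fintype.card γ)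
    (hN : 4 ≤ Fintype.card γ) :
    ∑ x, #{u ∈ (iimStep F σ).neighborFinset (Sum.inl x) | u.isLeft} ≤
      14 * ∑ x, (iimStep F σ).degree (Sum.inr x) := by
  classical
  calc _ = ∑ x, F.degree x := by
        simp only [filter_isLeft_neighborFinset_iimStep_inl, card_map,
          SimpleGraph.card_neighborFinset_eq_degree]
    _ ≤ 14 * ∑ x, F.minCopyDegree x :=
        F.sum_degree_le_fourteen_mul_sum_minCopyDegree hW hWcard hN
    _ ≤ _ := by
      gcongr with x
      exact minCopyDegree_le_degree_iimStep_inr F σ x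

section Levels

variable {V : Type} {l : ℕ}

lemma levelOf_le : ∀ (l : ℕ) (v : IterV V l), levelOf l v ≤ l
  | 0, _ => le_rfl
  | l + 1, Sum.inl v => (levelOf_le l v).trans l.le_succ
  | _ + 1, Sum.inr _ => le_rfl

lemma levelOf_succ_eq_iff (v : IterV V (l + 1)) :
    levelOf (l + 1) v = l + 1 ↔ v.isRight := by
  rcases v with v | v
  · simpa [levelOf] using (levelOf_le l v).trans_lt l.lt_succ_self |>.ne
  · simp [levelOf]

lemma isIndepSet_levelOf_succ (G : SimpleGraph V) (σ : ∀ i, IterV V i → Bool) :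
    (iimGraph G σ (l + 1)).IsIndepSet {v | levelOf (l + 1) v = l + 1} := by
  rintro u hu v hv -
  obtain ⟨u, rfl⟩ := Sum.isRight_iff.1 ((levelOf_succ_eq_iff u).1 hu)
  obtain ⟨v, rfl⟩ := Sum.isRight_iff.1 ((levelOf_succ_eq_iff v).1 hv)
  exact iimStep_not_adj_inr_inr _ _

lemma levelOf_succ_ne_iff (v : IterV V (l + 1)) :
    levelOf (l + 1) v ≠ l + 1 ↔ v.isLeft := by
  rw [ne_eq, levelOf_succ_eq_iff]
  rcases v with v | v <;> simp

lemma card_iterV [Fintype V] : ∀ l, Fintype.card (IterV V l) = 2 ^ l * Fintype.card V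
  | 0 => by rw [pow_zero, one_mul]; rfl
  | l + 1 => by
    rw [show Fintype.card (IterV V (l + 1)) = _ + _ from Fintype.card_sum, card_iterV l]
    ring

variable {M : Type*} [AddCommMonoid M] [Fintype V] (f : IterV V (l + 1) → M)

lemma sum_iterV_succ : ∑ v, f v = ∑ x, f (Sum.inl x) + ∑ x, f (Sum.inr x) :=
  Fintype.sum_sum_type f

lemma sum_filter_levelOf_ne_succ :
    ∑ v ∈ univ.filter (fun v : IterV V (l + 1) => levelOf (l + 1) v ≠ l + 1), f v =
      ∑ x, f (Sum.inl x) := by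
  simp [sum_filter, sum_iterV_succ, levelOf_succ_ne_iff]

lemma sum_filter_levelOf_succ :
    ∑ v ∈ univ.filter (fun v : IterV V (l + 1) => levelOf (l + 1) v = l + 1), f v =
      ∑ x, f (Sum.inr x) := by
  simp [sum_filter, sum_iterV_succ, levelOf_succ_eq_iff]

lemma two_mul_card_filter_levelOf_succ [DecidableEq V] :
    2 * #{v : IterV V (l + 1) | levelOf (l + 1) v = l + 1} = Fintype.card (IterV V (l + 1)) := by
  rw [card_eq_sum_ones, sum_filter_levelOf_succ, sum_const, card_univ, smul_eq_mul, mul_one,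
    show Fintype.card (IterV V (l + 1)) = _ + _ from Fintype.card_sum]
  omega

end Levels

open Finset in
open scoped Classical in
/-- For `l ≥ 4`, `H ∈ IIM_l(G)`, `X` the set of level-`l` vertices
and `X̄` its complement: `Σ_{v ∈ X̄} deg_{X̄}(v) ≤ 14 · Σ_{v ∈ X} deg_H(v)`, i.e.
`2|E(H[X̄])| ≤ 14 · vol(X)`. -/
theorem stmt1 {V : Type} [Fintype V] [Nonempty V] (G : SimpleGraph V)
    (l : ℕ) (hl : 4 ≤ l) (σ : ∀ i, IterV V i → Bool)
    (H : SimpleGraph (IterV V l)) (hH : H = iimGraph G σ l) :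
    ∑ v ∈ univ.filter (fun v : IterV V l => levelOf l v ≠ l),
        ((H.neighborFinset v).filter (fun u => levelOf l u ≠ l)).card ≤
      14 * ∑ v ∈ univ.filter (fun v : IterV V l => levelOf l v = l), H.degree v := by
  obtain ⟨k, rfl⟩ : ∃ k, l = k + 1 + 1 := ⟨l - 2, by omega⟩
  subst hH
  rw [sum_filter_levelOf_ne_succ, sum_filter_levelOf_succ]
  simp only [levelOf_succ_ne_iff]
  have hN : 4 ≤ Fintype.card (IterV V (k + 1)) := by
    rw [card_iterV]
    have := Fintype.card_pos (α := V)
    have : 2 ^ 2 ≤ 2 ^ (k + 1) := Nat.pow_le_pow_right two_pos (by omega)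
    nlinarith
  have hbound := sum_card_filter_isLeft_neighborFinset_iimStep_le (iimGraph G σ (k + 1))
    (σ (k + 1)) (by simpa using isIndepSet_levelOf_succ G σ) two_mul_card_filter_levelOf_succ hN
  -- `iimGraph G σ (k + 2)` is `iimStep (iimGraph G σ (k + 1)) (σ (k + 1))` only after unfolding
  -- the vertex type `IterV V (k + 2)`, which `exact` does not see through.
  convert hbound using 4 <;> rfl
end

section
/- Let G be a finite simple graph that is disconnected (has at least two connected components), and let H ∈ IIM_1(G) be connected. Then diam(H) ≤ 6. -/
/-!
Let `H` be the IIM graph and call `z` anticloned if its copy `z'` is an anticlone; `z'` is adjacent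
to every old vertex outside `N[z]`, in particular to every other component of `G`. Every vertex
of `H` is either within distance one of an old vertex `b` adjacent to some anticlone, or within
distance one of every anticloned old vertex. For each kind of pair of vertices there is a path of
length at most six through one or two anticlones, unless the closed neighbourhoods of the
anticloned vertices are forced to be whole components of `G`. In that case some component `C`,
together with the clones of its vertices and the anticlones of the vertices outside it, is closed
under adjacency in `H`, contradicting connectivity.
-/

open Sum

namespace SimpleGraph

variable {W : Type*} {H : SimpleGraph W} {x y a : W}

lemma Adj.edist_le_one (h : H.Adj x y) : H.edist x y ≤ 1 :=
  edist_le_one_iff_adj_or_eq.mpr (.inl h)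

lemma edist_le_one_add {n : ℕ∞} (hxa : H.edist x a ≤ 1) (hay : H.edist a y ≤ n) :
    H.edist x y ≤ 1 + n :=
  H.edist_triangle.trans (add_le_add hxa hay)

lemma Preconnected.mem_of_forall_adj_mem (hH : H.Preconnected) {S : Set W}
    (hS : ∀ a ∈ S, ∀ b, H.Adj a b → b ∈ S) (hx : x ∈ S) (y : W) : y ∈ S := by
  obtain ⟨w⟩ := hH x y
  induction w with
  | nil => exact hx
  | cons hadj _ ih => exact ih (hS _ hx _ hadj)

variable {V : Type} {G : SimpleGraph V}

/-- `N[v]`, oriented so that `u ∈ closedNbhd G v` is literally the condition in `iimStep`. -/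
def closedNbhd (G : SimpleGraph V) (v : V) : Set V := {u | u = v ∨ G.Adj u v}

lemma mem_closedNbhd_self (v : V) : v ∈ closedNbhd G v := Or.inl rfl

lemma mem_closedNbhd_comm {u v : V} : u ∈ closedNbhd G v ↔ v ∈ closedNbhd G u := by
  simp only [closedNbhd, Set.mem_ofPred_eq, eq_comm, G.adj_comm]

lemma reachable_of_mem_closedNbhd {u v : V} (h : u ∈ closedNbhd G v) : G.Reachable u v := by
  rcases h with rfl | h
  exacts [.rfl, h.reachable]

lemma mem_of_mem_closedNbhd {C : Set V} (hC : ∀ a ∈ C, ∀ c, G.Adj a c → c ∈ C) {u v : V}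
    (hv : v ∈ C) (h : u ∈ closedNbhd G v) : u ∈ C := by
  rcases h with rfl | h
  exacts [hv, hC v hv u h.symm]

lemma exists_not_mem_closedNbhd (hG : ¬ G.Preconnected) (v : V) :
    ∃ b, b ∉ closedNbhd G v := by
  by_contra! h
  exact hG fun a b ↦
    (reachable_of_mem_closedNbhd (h a)).trans (reachable_of_mem_closedNbhd (h b)).symm

end SimpleGraph

open SimpleGraph

variable {V : Type} {G : SimpleGraph V}

section iimStep

variable {s : V → Bool} {u v z : V}

lemma iimStep_adj_clone (hv : s v = true) :
    (iimStep G s).Adj (inl u) (inr v) ↔ u ∈ closedNbhd G v := by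
  change (if s v = true then _ else _) ↔ _
  rw [if_pos hv]; rfl

lemma iimStep_adj_anticlone (hz : s z = false) :
    (iimStep G s).Adj (inl u) (inr z) ↔ u ∉ closedNbhd G z := by
  change (if s z = true then _ else _) ↔ _
  rw [if_neg (by simp [hz])]; rfl

lemma iimStep_adj_inl_inl_s3 : (iimStep G s).Adj (inl u) (inl v) ↔ G.Adj u v := Iff.rfl

lemma iimStep_edist_inl_le_one (h : u ∈ closedNbhd G v) :
    (iimStep G s).edist (inl u) (inl v) ≤ 1 := by
  rcases h with rfl | h
  · simp
  · exact Adj.edist_le_one (H := iimStep G s) h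

lemma iimStep_not_preconnected {C : Set V} (hC : ∀ a ∈ C, ∀ c, G.Adj a c → c ∈ C)
    (hin : ∀ z ∈ C, s z = false → C ⊆ closedNbhd G z)
    (hout : ∀ z ∉ C, s z = false → Cᶜ ⊆ closedNbhd G z) (hu : u ∈ C) (hv : v ∉ C) :
    ¬ (iimStep G s).Preconnected := by
  intro hH
  -- `C`, the clones of its vertices and the anticlones of the vertices outside it
  refine hv (hH.mem_of_forall_adj_mem (S := Sum.elim C fun q ↦ (s q = true ↔ q ∈ C))
    ?_ (x := inl u) hu (inl v))
  rintro (a | q) ha (c | q') hadj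
  · exact hC a ha c hadj
  · change s q' = true ↔ q' ∈ C
    cases hq' : s q'
    · simp only [Bool.false_eq_true, false_iff]
      exact fun hq'C ↦ (iimStep_adj_anticlone hq').mp hadj (hin q' hq'C hq' ha)
    · simp only [true_iff]
      exact mem_of_mem_closedNbhd hC ha
        (mem_closedNbhd_comm.mp ((iimStep_adj_clone hq').mp hadj))
  · change s q = true ↔ q ∈ C at ha
    change c ∈ C
    replace hadj : (iimStep G s).Adj (inl c) (inr q) := hadj.symm
    cases hq : s q
    · simp only [hq, Bool.false_eq_true, false_iff] at ha
      by_contra hc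
      exact (iimStep_adj_anticlone hq).mp hadj (hout q ha hq hc)
    · simp only [hq, true_iff] at ha
      exact mem_of_mem_closedNbhd hC ha ((iimStep_adj_clone hq).mp hadj)
  · exact hadj.elim

lemma exists_anticloned (hG : ¬ G.Preconnected) (hH : (iimStep G s).Preconnected) :
    ∃ z, s z = false := by
  by_contra! h
  simp only [ne_eq, Bool.not_eq_false] at h
  obtain ⟨u, v, huv⟩ : ∃ u v, ¬ G.Reachable u v := by
    simpa [Preconnected] using hG
  exact iimStep_not_preconnected (C := {w | G.Reachable u w})
    (fun a ha c hac ↦ ha.trans hac.reachable) (fun z _ hz ↦ by simp [h z] at hz)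
    (fun z _ hz ↦ by simp [h z] at hz) (Reachable.refl u) huv hH

lemma iimStep_near_anticlone_or_near_all_anticloned (hG : ¬ G.Preconnected) (x : V ⊕ V) :
    (∃ b z, (iimStep G s).edist x (inl b) ≤ 1 ∧ s z = false ∧ b ∉ closedNbhd G z) ∨
      ∀ z, s z = false → (iimStep G s).edist x (inl z) ≤ 1 := by
  rcases x with u | p
  · by_cases h : ∃ z, s z = false ∧ u ∉ closedNbhd G z
    · obtain ⟨z, hz, hu⟩ := h
      exact .inl ⟨u, z, by simp, hz, hu⟩
    · push Not at h
      exact .inr fun z hz ↦ iimStep_edist_inl_le_one (h z hz)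
  · cases hp : s p
    · obtain ⟨b, hb⟩ := exists_not_mem_closedNbhd hG p
      exact .inl ⟨b, p, ((iimStep_adj_anticlone hp).mpr hb).symm.edist_le_one, hp, hb⟩
    · by_cases h : ∃ b z, b ∈ closedNbhd G p ∧ s z = false ∧ b ∉ closedNbhd G z
      · obtain ⟨b, z, hb, hz, hbz⟩ := h
        exact .inl ⟨b, z, ((iimStep_adj_clone hp).mpr hb).symm.edist_le_one, hz, hbz⟩
      · push Not at h
        exact .inr fun z hz ↦ ((iimStep_adj_clone hp).mpr
          (mem_closedNbhd_comm.mp (h p z (mem_closedNbhd_self p) hz))).symm.edist_le_one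

lemma iimStep_edist_le_six_of_near_anticlone_of_near_all (hH : (iimStep G s).Preconnected)
    {x y : V ⊕ V} {b z₁ : V} (hx : (iimStep G s).edist x (inl b) ≤ 1)
    (hz₁ : s z₁ = false) (hb : b ∉ closedNbhd G z₁)
    (hy : ∀ z, s z = false → (iimStep G s).edist y (inl z) ≤ 1) :
    (iimStep G s).edist x y ≤ 6 := by
  by_cases hpath : ∃ zA zB a, s zA = false ∧ s zB = false ∧ b ∉ closedNbhd G zA ∧
      a ∉ closedNbhd G zA ∧ a ∈ closedNbhd G zB
  · obtain ⟨zA, zB, a, hzA, hzB, hbA, haA, haB⟩ := hpath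
    -- x, b, zA', a, zB, y
    calc _ ≤ 1 + (1 + (1 + (1 + 1))) :=
          edist_le_one_add hx <|
          edist_le_one_add ((iimStep_adj_anticlone hzA).mpr hbA).edist_le_one <|
          edist_le_one_add ((iimStep_adj_anticlone hzA).mpr haA).symm.edist_le_one <|
          edist_le_one_add (iimStep_edist_inl_le_one haB) (edist_comm.trans_le (hy zB hzB))
      _ ≤ 6 := by norm_num
  by_cases hexit : ∃ m ∈ closedNbhd G z₁, ∃ a, G.Adj m a ∧ a ∉ closedNbhd G z₁
  · obtain ⟨m, hm, a, hma, ha⟩ := hexit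
    -- x, b, z₁', a, m, z₁, y
    calc _ ≤ 1 + (1 + (1 + (1 + (1 + 1)))) :=
          edist_le_one_add hx <|
          edist_le_one_add ((iimStep_adj_anticlone hz₁).mpr hb).edist_le_one <|
          edist_le_one_add ((iimStep_adj_anticlone hz₁).mpr ha).symm.edist_le_one <|
          edist_le_one_add (iimStep_adj_inl_inl_s3.mpr hma.symm).edist_le_one <|
          edist_le_one_add (iimStep_edist_inl_le_one hm) (edist_comm.trans_le (hy z₁ hz₁))
      _ ≤ 6 := by norm_num
  push Not at hpath hexit
  -- now `N[z₁]` is a component of `G` avoiding `b`, shared by all anticloned vertices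
  have hsame : ∀ z, s z = false → closedNbhd G z = closedNbhd G z₁ := by
    intro z hz
    have hbz : b ∉ closedNbhd G z := hpath z₁ z b hz₁ hz hb hb
    ext a
    exact ⟨fun ha ↦ by_contra fun ha₁ ↦ hpath z₁ z a hz₁ hz hb ha₁ ha,
      fun ha₁ ↦ by_contra fun ha ↦ hpath z z₁ a hz hz₁ hbz ha ha₁⟩
  refine absurd hH <| iimStep_not_preconnected (C := closedNbhd G z₁) hexit
    (fun z _ hz ↦ (hsame z hz).ge)
    (fun z hzC hz ↦ absurd (hsame z hz ▸ mem_closedNbhd_self z) hzC)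
    (mem_closedNbhd_self z₁) hb

lemma iimStep_edist_le_six_of_near_anticlones (hG : ¬ G.Preconnected)
    (hH : (iimStep G s).Preconnected) {x y : V ⊕ V} {b₁ z₁ b₂ z₂ : V}
    (hx : (iimStep G s).edist x (inl b₁) ≤ 1) (hz₁ : s z₁ = false)
    (hb₁ : b₁ ∉ closedNbhd G z₁) (hy : (iimStep G s).edist y (inl b₂) ≤ 1)
    (hz₂ : s z₂ = false) (hb₂ : b₂ ∉ closedNbhd G z₂) :
    (iimStep G s).edist x y ≤ 6 := by
  by_cases hpath : ∃ zA zB a, s zA = false ∧ s zB = false ∧ b₁ ∉ closedNbhd G zA ∧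
      b₂ ∉ closedNbhd G zB ∧ a ∉ closedNbhd G zA ∧ a ∉ closedNbhd G zB
  · obtain ⟨zA, zB, a, hzA, hzB, hbA, hbB, haA, haB⟩ := hpath
    -- x, b₁, zA', a, zB', b₂, y
    calc _ ≤ 1 + (1 + (1 + (1 + (1 + 1)))) :=
          edist_le_one_add hx <|
          edist_le_one_add ((iimStep_adj_anticlone hzA).mpr hbA).edist_le_one <|
          edist_le_one_add ((iimStep_adj_anticlone hzA).mpr haA).symm.edist_le_one <|
          edist_le_one_add ((iimStep_adj_anticlone hzB).mpr haB).edist_le_one <|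
          edist_le_one_add ((iimStep_adj_anticlone hzB).mpr hbB).symm.edist_le_one
            (edist_comm.trans_le hy)
      _ ≤ 6 := by norm_num
  push Not at hpath
  -- now `N[z₁]`, `N[z₂]` are the two components of `G`, each dominated by its anticloned
  -- vertices
  have hcover : ∀ a, a ∉ closedNbhd G z₁ → a ∈ closedNbhd G z₂ :=
    fun a ↦ hpath z₁ z₂ a hz₁ hz₂ hb₁ hb₂
  have hsep : ¬ G.Reachable z₁ z₂ := by
    intro h
    have hall : ∀ w, G.Reachable z₁ w := fun w ↦ by
      by_cases hw : w ∈ closedNbhd G z₁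
      · exact (reachable_of_mem_closedNbhd hw).symm
      · exact h.trans (reachable_of_mem_closedNbhd (hcover w hw)).symm
    exact hG fun u v ↦ (hall u).symm.trans (hall v)
  refine absurd hH <| iimStep_not_preconnected (C := {w | G.Reachable z₁ w})
    (fun a ha c hac ↦ ha.trans hac.reachable) ?_ ?_ (Reachable.refl z₁) hsep
  · intro z hzC hz w hw
    have hbz : b₁ ∉ closedNbhd G z := fun h ↦ hsep <| hzC.trans <|
      (reachable_of_mem_closedNbhd h).symm.trans (reachable_of_mem_closedNbhd (hcover b₁ hb₁))
    by_contra hwz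
    exact hsep (hw.trans (reachable_of_mem_closedNbhd (hpath z z₂ w hz hz₂ hbz hb₂ hwz)))
  · intro z hzC hz w hwC
    have hb₂₁ : b₂ ∈ closedNbhd G z₁ := by_contra fun h ↦ hb₂ (hcover b₂ h)
    have hbz : b₂ ∉ closedNbhd G z := fun h ↦ hzC <|
      (reachable_of_mem_closedNbhd hb₂₁).symm.trans (reachable_of_mem_closedNbhd h)
    by_contra hwz
    exact hwC (reachable_of_mem_closedNbhd
      (by_contra fun hw₁ ↦ hwz (hpath z₁ z w hz₁ hz hb₁ hbz hw₁))).symm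

lemma iimStep_edist_le_six (hG : ¬ G.Preconnected) (hH : (iimStep G s).Preconnected)
    (x y : V ⊕ V) : (iimStep G s).edist x y ≤ 6 := by
  rcases iimStep_near_anticlone_or_near_all_anticloned hG x with
    ⟨b₁, z₁, hx, hz₁, hb₁⟩ | hx <;>
  rcases iimStep_near_anticlone_or_near_all_anticloned hG y with
    ⟨b₂, z₂, hy, hz₂, hb₂⟩ | hy
  · exact iimStep_edist_le_six_of_near_anticlones hG hH hx hz₁ hb₁ hy hz₂ hb₂
  · exact iimStep_edist_le_six_of_near_anticlone_of_near_all hH hx hz₁ hb₁ hy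
  · rw [edist_comm]
    exact iimStep_edist_le_six_of_near_anticlone_of_near_all hH hy hz₂ hb₂ hx
  · obtain ⟨z, hz⟩ := exists_anticloned hG hH
    calc _ ≤ 1 + 1 := edist_le_one_add (hx z hz) (edist_comm.trans_le (hy z hz))
      _ ≤ 6 := by norm_num

end iimStep

theorem stmt3_general {V : Type} (G : SimpleGraph V)
    (hG : ¬ G.Preconnected)
    (σ : ∀ i, IterV V i → Bool) (hH : (iimGraph G σ 1).Connected) :
    (iimGraph G σ 1).diam ≤ 6 :=
  ENat.toNat_le_of_le_natCast <| ediam_le_of_edist_le <|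
    iimStep_edist_le_six (s := σ 0) hG hH.preconnected

/-- If `G` is a disconnected finite graph (at least two connected
components) and `H ∈ IIM_1(G)` is connected, then `diam(H) ≤ 6`. -/
theorem stmt3 {V : Type} [Fintype V] (G : SimpleGraph V)
    (hG : ¬ G.Preconnected)
    (σ : ∀ i, IterV V i → Bool) (hH : (iimGraph G σ 1).Connected) :
    (iimGraph G σ 1).diam ≤ 6 :=
  stmt3_general G hG σ hH
end

section
/- Let G be a connected finite simple graph with diam(G) ≥ 2, and let H ∈ IIM_1(G) be the graph obtained from G by one IIM step in which every vertex is cloned (the choice function is constantly 'clone'). Then H is connected and diam(H) = diam(G). -/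
/-!
Let `π : V ⊕ V → V` send each vertex and its clone to the original vertex. Every edge of the
all-clone graph `H` maps under `π` to an edge or a single vertex of `G`, so `π` does not increase
distances and `diam H ≥ diam G`. Conversely, a vertex over `u` is adjacent to every old vertex
`inl w` with `w ∼ u`, so a shortest `G`-path `π a = x₀, x₁, …, x_k = π b` with `k ≥ 2` lifts to
the `H`-path `a, x₁, …, x_{k-1}, b`; pairs with `π a` and `π b` at distance at most one are at
distance at most two in `H`. Hence `diam H ≤ max 2 (diam G) = diam G`.
-/

namespace SimpleGraph

variable {V : Type} (G : SimpleGraph V)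

abbrev cloneAll : SimpleGraph (V ⊕ V) := iimStep G fun _ => true

def origin : V ⊕ V → V := Sum.elim id id

@[simp] lemma origin_inl (v : V) : origin (.inl v) = v := rfl

@[simp] lemma origin_inr (v : V) : origin (.inr v) = v := rfl

def cloneAllInl : G →g G.cloneAll where
  toFun := Sum.inl
  map_rel' h := h

variable {G}

@[simp] lemma cloneAll_adj_inl_inl {u v : V} : G.cloneAll.Adj (.inl u) (.inl v) ↔ G.Adj u v :=
  Iff.rfl

@[simp] lemma cloneAll_adj_inl_inr {u v : V} :
    G.cloneAll.Adj (.inl u) (.inr v) ↔ u = v ∨ G.Adj u v :=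
  Iff.rfl

@[simp] lemma cloneAll_adj_inr_inl {u v : V} :
    G.cloneAll.Adj (.inr u) (.inl v) ↔ v = u ∨ G.Adj v u :=
  Iff.rfl

@[simp] lemma cloneAll_not_adj_inr_inr {u v : V} : ¬G.cloneAll.Adj (.inr u) (.inr v) :=
  id

lemma cloneAll_adj_inl_of_adj {a : V ⊕ V} {w : V} (h : G.Adj (origin a) w) :
    G.cloneAll.Adj a (.inl w) := by
  rcases a with u | u
  · exact h
  · exact Or.inr h.symm

lemma cloneAll_edist_le_one_of_origin_eq {a b : V ⊕ V} (h : origin a = origin b) :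
    G.cloneAll.edist a b ≤ 1 := by
  rw [edist_le_one_iff_adj_or_eq]
  rcases a with u | u <;> rcases b with v | v <;>
    simp only [origin_inl, origin_inr] at h <;> subst h
  · exact Or.inr rfl
  · exact Or.inl (Or.inl rfl)
  · exact Or.inl (Or.inl rfl)
  · exact Or.inr rfl

lemma edist_origin_le_one_of_cloneAll_adj {a b : V ⊕ V} (h : G.cloneAll.Adj a b) :
    G.edist (origin a) (origin b) ≤ 1 := by
  rw [edist_le_one_iff_adj_or_eq]
  rcases a with u | u <;> rcases b with v | v <;>
    simp only [cloneAll_adj_inl_inl, cloneAll_adj_inl_inr, cloneAll_adj_inr_inl,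
      cloneAll_not_adj_inr_inr, origin_inl, origin_inr] at h ⊢
  · exact Or.inl h
  · exact h.symm
  · exact h.symm.imp G.adj_symm Eq.symm

lemma edist_origin_le_length {a b : V ⊕ V} (w : G.cloneAll.Walk a b) :
    G.edist (origin a) (origin b) ≤ w.length := by
  induction w with
  | nil => simp
  | @cons a c b h w ih =>
    calc G.edist (origin a) (origin b)
        ≤ G.edist (origin a) (origin c) + G.edist (origin c) (origin b) := G.edist_triangle
      _ ≤ 1 + w.length := add_le_add (edist_origin_le_one_of_cloneAll_adj h) ih
      _ = (w.cons h).length := by rw [Walk.length_cons, Nat.cast_succ, add_comm]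

lemma edist_origin_le_cloneAll_edist (a b : V ⊕ V) :
    G.edist (origin a) (origin b) ≤ G.cloneAll.edist a b := by
  by_cases hab : G.cloneAll.edist a b = ⊤
  · exact hab ▸ le_top
  obtain ⟨w, hw⟩ := exists_walk_of_edist_ne_top hab
  exact hw ▸ edist_origin_le_length w

lemma cloneAll_edist_inl_inl_le (u v : V) :
    G.cloneAll.edist (.inl u) (.inl v) ≤ G.edist u v := by
  by_cases huv : G.edist u v = ⊤
  · exact huv ▸ le_top
  obtain ⟨p, hp⟩ := exists_walk_of_edist_ne_top huv
  have hlift := edist_le (p.map G.cloneAllInl)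
  rwa [Walk.length_map, hp] at hlift

lemma cloneAll_edist_inl_le {a : V ⊕ V} {y : V} (q : G.Walk (origin a) y) (hq : q.length ≠ 0) :
    G.cloneAll.edist a (.inl y) ≤ q.length := by
  cases q with
  | nil => exact absurd rfl hq
  | cons h q =>
    calc G.cloneAll.edist a (.inl y)
        ≤ G.cloneAll.edist a (.inl _) + G.cloneAll.edist (.inl _) (.inl y) :=
          G.cloneAll.edist_triangle
      _ ≤ 1 + q.length := by
          gcongr
          · exact edist_le_one_iff_adj_or_eq.mpr (.inl (cloneAll_adj_inl_of_adj h))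
          · exact (cloneAll_edist_inl_inl_le _ _).trans (edist_le q)
      _ = (q.cons h).length := by rw [Walk.length_cons, Nat.cast_succ, add_comm]

lemma cloneAll_edist_le_length {a b : V ⊕ V} (q : G.Walk (origin a) (origin b))
    (hq : 2 ≤ q.length) : G.cloneAll.edist a b ≤ q.length := by
  generalize hb : origin b = y at q
  cases q with
  | nil => simp at hq
  | @cons _ x _ h q =>
    subst hb
    have hq' : q.reverse.length ≠ 0 := by
      rw [Walk.length_reverse]
      rw [Walk.length_cons] at hq
      omega
    calc G.cloneAll.edist a b
        ≤ G.cloneAll.edist a (.inl x) + G.cloneAll.edist b (.inl x) := by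
          rw [edist_comm (u := b)]; exact G.cloneAll.edist_triangle
      _ ≤ 1 + q.reverse.length := by
          gcongr
          · exact edist_le_one_iff_adj_or_eq.mpr (.inl (cloneAll_adj_inl_of_adj h))
          · exact cloneAll_edist_inl_le q.reverse hq'
      _ = (q.cons h).length := by
          rw [Walk.length_reverse, Walk.length_cons, Nat.cast_succ, add_comm]

lemma cloneAll_edist_le_max_two (a b : V ⊕ V) :
    G.cloneAll.edist a b ≤ max 2 (G.edist (origin a) (origin b)) := by
  by_cases hab : G.edist (origin a) (origin b) = ⊤
  · simp [hab]
  obtain ⟨q, hq⟩ := exists_walk_of_edist_ne_top hab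
  rw [← hq]
  match hlen : q.length with
  | 0 =>
    exact (cloneAll_edist_le_one_of_origin_eq (q.eq_of_length_eq_zero hlen)).trans
      (by norm_num)
  | 1 =>
    have hadj := q.adj_of_length_eq_one hlen
    calc G.cloneAll.edist a b
        ≤ G.cloneAll.edist a (.inl (origin b)) + G.cloneAll.edist (.inl (origin b)) b :=
          G.cloneAll.edist_triangle
      _ ≤ 1 + 1 := by
          gcongr
          · exact edist_le_one_iff_adj_or_eq.mpr (.inl (cloneAll_adj_inl_of_adj hadj))
          · exact cloneAll_edist_le_one_of_origin_eq rfl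
      _ ≤ max 2 ((1 : ℕ) : ℕ∞) := by norm_num
  | k + 2 =>
    have hk := cloneAll_edist_le_length q (by omega)
    rw [hlen] at hk
    exact hk.trans (le_max_right _ _)

lemma cloneAll_ediam (h : 2 ≤ G.ediam) : G.cloneAll.ediam = G.ediam := by
  apply le_antisymm
  · exact ediam_le_of_edist_le fun a b =>
      (cloneAll_edist_le_max_two a b).trans (max_le h edist_le_ediam)
  · exact ediam_le_of_edist_le fun u v =>
      (edist_origin_le_cloneAll_edist (.inl u) (.inl v)).trans edist_le_ediam

lemma diam_le_ediam : (G.diam : ℕ∞) ≤ G.ediam :=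
  ENat.natCast_toNat_le_self _

lemma cloneAll_connected_and_diam_eq (h : 2 ≤ G.diam) :
    G.cloneAll.Connected ∧ G.cloneAll.diam = G.diam := by
  have hediam := cloneAll_ediam ((Nat.cast_le.mpr h).trans diam_le_ediam)
  have : Nontrivial V := nontrivial_of_diam_ne_zero (G := G) (by omega)
  refine ⟨connected_of_ediam_ne_top ?_, by rw [diam, diam, hediam]⟩
  exact hediam ▸ ediam_ne_top_of_diam_ne_zero (by omega)

end SimpleGraph

theorem stmt7_general {V : Type} (G : SimpleGraph V)
    (hdiam : 2 ≤ G.diam)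
    (σ : ∀ i, IterV V i → Bool) (hσ : ∀ v : V, σ 0 v = true) :
    (iimGraph G σ 1).Connected ∧ (iimGraph G σ 1).diam = G.diam := by
  have hclone : iimGraph G σ 1 = G.cloneAll := congrArg (iimStep G) (funext hσ)
  exact hclone ▸ G.cloneAll_connected_and_diam_eq hdiam

/-- If `G` is connected with `diam(G) ≥ 2` and `H ∈ IIM_1(G)` is
obtained by cloning every vertex, then `H` is connected and `diam(H) = diam(G)`. -/
theorem stmt7 {V : Type} [Fintype V] (G : SimpleGraph V) (hG : G.Connected)
    (hdiam : 2 ≤ G.diam)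
    (σ : ∀ i, IterV V i → Bool) (hσ : ∀ v : V, σ 0 v = true) :
    (iimGraph G σ 1).Connected ∧ (iimGraph G σ 1).diam = G.diam :=
  stmt7_general G hdiam σ hσ
end
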